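/- For all finite multisets Ω1, Ω2 of solution mappings, the simple difference satisfies Ω1 \ Ω2 = Ω1 \ (Ω1 ⋈ Ω2) as an equality of multisets. (This is the set-theoretic axiom A \ (A ∩ B) = A \ B for the simple-difference operator, and the key identity underlying the simulation of OPTIONAL by DIFF.) -/
import Mathlib


open scoped Classical

noncomputable section

/-- A solution mapping: a finite partial function from variables to terms. -/
abbrev SMap (V T : Type) := Finmap (fun _ : V => T)

variable {V T : Type} [DecidableEq V] [DecidableEq T]

/-- Two solution mappings are compatible if they agree on the
intersection of their domains. -/
def Compat (μ1 μ2 : SMap V T) : Prop :=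
  ∀ x ∈ μ1, x ∈ μ2 → μ1.lookup x = μ2.lookup x

/-- Join of two multisets of solution mappings: unions of compatible pairs,
multiplicities multiply and add over all decompositions. -/
def mjoin (Ω1 Ω2 : Multiset (SMap V T)) : Multiset (SMap V T) :=
  Ω1.bind fun μ1 => (Ω2.filter fun μ2 => Compat μ1 μ2).map fun μ2 => μ1 ∪ μ2

/-- Simple difference: keep (with multiplicity) the mappings of `Ω1`
incompatible with every element of `Ω2`. -/
def msdiff (Ω1 Ω2 : Multiset (SMap V T)) : Multiset (SMap V T) :=
  Ω1.filter fun μ1 => ∀ μ2 ∈ Ω2, ¬ Compat μ1 μ2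

/-- SPARQL minus: keep (with multiplicity) the mappings of `Ω1` such that every
element of `Ω2` is incompatible with it or has disjoint domain. -/
def sminus (Ω1 Ω2 : Multiset (SMap V T)) : Multiset (SMap V T) :=
  Ω1.filter fun μ1 => ∀ μ2 ∈ Ω2, ¬ Compat μ1 μ2 ∨ μ1.keys ∩ μ2.keys = ∅

/-- Domain of a multiset of mappings: the union of the domains of its elements. -/
def mdom (Ω : Multiset (SMap V T)) : Finset V := (Ω.map Finmap.keys).sup

/-- A multiset of mappings is domain-uniform when all its elements have the
same domain. -/
def DomUniform (Ω : Multiset (SMap V T)) : Prop :=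
  ∀ μ1 ∈ Ω, ∀ μ2 ∈ Ω, Finmap.keys μ1 = Finmap.keys μ2

/-- Three truth values: true, false, error. -/
inductive TV where | t | f | e
deriving DecidableEq

/-- Strong Kleene conjunction. -/
def TV.andTV : TV → TV → TV
  | .t, q => q
  | .f, _ => .f
  | .e, .t => .e
  | .e, .f => .f
  | .e, .e => .e

/-- Strong Kleene disjunction. -/
def TV.orTV : TV → TV → TV
  | .t, _ => .t
  | .f, q => q
  | .e, .t => .t
  | .e, .f => .e
  | .e, .e => .e

/-- Three-valued negation. -/
def TV.notTV : TV → TV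
  | .t => .f
  | .f => .t
  | .e => .e

/-- Selection formulas, built from atoms `x = c`, `x = y` and `bound x`. -/
inductive SForm (V T : Type) where
  | eqc : V → T → SForm V T
  | eqv : V → V → SForm V T
  | bound : V → SForm V T
  | fand : SForm V T → SForm V T → SForm V T
  | for' : SForm V T → SForm V T → SForm V T
  | fnot : SForm V T → SForm V T

/-- Three-valued evaluation of a selection formula on a solution mapping. -/
def evalF (μ : SMap V T) : SForm V T → TV
  | .eqc x c =>
    match μ.lookup x with
    | some a => if a = c then .t else .f
    | none => .e
  | .eqv x y =>
    match μ.lookup x, μ.lookup y with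
    | some a, some b => if a = b then .t else .f
    | some _, none => .e
    | none, _ => .e
  | .bound x => if x ∈ μ then .t else .f
  | .fand F1 F2 => (evalF μ F1).andTV (evalF μ F2)
  | .for' F1 F2 => (evalF μ F1).orTV (evalF μ F2)
  | .fnot F1 => (evalF μ F1).notTV

/-- Selection: keep (with multiplicity) the mappings evaluating `F` to true. -/
def sel (F : SForm V T) (Ω : Multiset (SMap V T)) : Multiset (SMap V T) :=
  Ω.filter fun μ => evalF μ F = .t

/-- W3C difference: keep (with multiplicity) the mappings `μ1` of `Ω1` such that
every `μ2 ∈ Ω2` is incompatible with `μ1`, or compatible with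
`(μ1 ∪ μ2)(F) = false`. -/
def wdiff (F : SForm V T) (Ω1 Ω2 : Multiset (SMap V T)) : Multiset (SMap V T) :=
  Ω1.filter fun μ1 => ∀ μ2 ∈ Ω2,
    ¬ Compat μ1 μ2 ∨ (Compat μ1 μ2 ∧ evalF (μ1 ∪ μ2) F = .f)

end

/-- the simple difference satisfies `A \ (A ∩ B) = A \ B`,
with the join playing the role of the intersection. -/
theorem stmt_6 {V T : Type} [DecidableEq V] [DecidableEq T]
    (Ω1 Ω2 : Multiset (SMap V T)) :
    msdiff Ω1 Ω2 = msdiff Ω1 (mjoin Ω1 Ω2) := by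
  unfold msdiff
  apply Multiset.filter_congr
  intro μ1 hμ1
  constructor
  · intro h ν hν hcν
    simp only [mjoin, Multiset.mem_bind, Multiset.mem_map, Multiset.mem_filter] at hν
    obtain ⟨μ, hμ, μ2, ⟨hμ2, hc⟩, rfl⟩ := hν
    apply h μ2 hμ2
    intro x hx1 hx2
    have hxu : x ∈ μ ∪ μ2 := Finmap.mem_union.mpr (Or.inr hx2)
    have := hcν x hx1 hxu
    rw [this]
    by_cases hxm : x ∈ μ
    · rw [Finmap.lookup_union_left hxm]
      exact hc x hxm hx2
    · rw [Finmap.lookup_union_right hxm]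
  · intro h μ2 hμ2 hc
    apply h (μ1 ∪ μ2) _ ?_
    · simp only [mjoin, Multiset.mem_bind, Multiset.mem_map, Multiset.mem_filter]
      exact ⟨μ1, hμ1, μ2, ⟨hμ2, hc⟩, rfl⟩
    · intro x hx1 _
      rw [Finmap.lookup_union_left hx1]
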